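/- If iH₀' = Σ_{m=1}^{ℓ} ε_m h_m and iH₁ = Σ_{m=1}^{ℓ} δ_m y_m in the sp(ℓ) basis with all ε_m, δ_m real and nonzero, and if ω_m² ≠ ω_ℓ² for all 1 ≤ m ≤ ℓ-1 (where ω_m = ε_{m+1} - ε_m for m < ℓ and ω_ℓ = 2ε_ℓ), then the Lie algebra generated by iH₀' and iH₁ contains y_ℓ. -/

import Mathlib

/-!
`iH₀' = Σ ε_m h_m` is the diagonal matrix `i · diag(ε_1, …, ε_ℓ, -ε_1, …, -ε_ℓ)`, so each `y_m`
is an eigenvector of `X ↦ [[iH₀', X], iH₀']` with eigenvalue `ω_m²`. Applying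
`X ↦ [[iH₀', X], iH₀'] - ω_j² X` to `iH₁ = Σ δ_m y_m` multiplies the coefficient of `y_m` by
`ω_m² - ω_j²`; doing this for `j = 1, …, ℓ-1` kills every `y_m` with `m < ℓ` and, as
`ω_ℓ² ≠ ω_j²`, leaves a nonzero multiple of `y_ℓ`.
-/

open Matrix

attribute [local instance 100] LieRing.ofAssociativeRing

/-- The `N×N` standard matrix unit `e_{a,b}` (1-based indices). -/
noncomputable def e (N a b : ℕ) : Matrix (Fin N) (Fin N) ℂ :=
  Matrix.of fun i j => if (i : ℕ) + 1 = a ∧ (j : ℕ) + 1 = b then 1 else 0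

/-- `x_{a,b} = e_{a,b} - e_{b,a}`. -/
noncomputable def X (N a b : ℕ) : Matrix (Fin N) (Fin N) ℂ := e N a b - e N b a

/-- `y_{a,b} = i (e_{a,b} + e_{b,a})`. -/
noncomputable def Y (N a b : ℕ) : Matrix (Fin N) (Fin N) ℂ :=
  Complex.I • (e N a b + e N b a)

/-- Cartan generator of `sp(ℓ)`: `h_m = i (e_{m,m} - e_{m+ℓ,m+ℓ})`. -/
noncomputable def hC (l m : ℕ) : Matrix (Fin (2 * l)) (Fin (2 * l)) ℂ :=
  Complex.I • (e (2 * l) m m - e (2 * l) (m + l) (m + l))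

/-- Generators `x_m` of `sp(ℓ)`: `x_m = x_{ε_m - ε_{m+1}}` for `m < ℓ`,
`x_ℓ = x_{2ε_ℓ} = x_{2ℓ,ℓ}`. -/
noncomputable def xC (l m : ℕ) : Matrix (Fin (2 * l)) (Fin (2 * l)) ℂ :=
  if m = l then X (2 * l) (2 * l) l
  else X (2 * l) (m + 1) m - X (2 * l) (m + l) (m + l + 1)

/-- Generators `y_m` of `sp(ℓ)`: `y_m = y_{ε_m - ε_{m+1}}` for `m < ℓ`,
`y_ℓ = y_{2ε_ℓ} = y_{2ℓ,ℓ}`. -/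
noncomputable def yC (l m : ℕ) : Matrix (Fin (2 * l)) (Fin (2 * l)) ℂ :=
  if m = l then Y (2 * l) (2 * l) l
  else Y (2 * l) (m + 1) m - Y (2 * l) (m + l) (m + l + 1)

/-- `ω_m = ε_{m+1} - ε_m` for `m < ℓ`, `ω_ℓ = 2 ε_ℓ`. -/
noncomputable def w (l : ℕ) (ε : ℕ → ℝ) (m : ℕ) : ℝ :=
  if m = l then 2 * ε l else ε (m + 1) - ε m

namespace LieSubalgebra

variable {K L : Type*} [LieRing L] {H : L} {ι : Type*} {s : Finset ι} {v : ι → L}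

theorem sum_smul_prod_mem_of_lie_lie_eq_smul [CommRing K] [LieAlgebra K L]
    (S : LieSubalgebra K L) (hH : H ∈ S) {μ : ι → K} (hv : ∀ i ∈ s, ⁅⁅H, v i⁆, H⁆ = μ i • v i)
    {c : ι → K} (hc : ∑ i ∈ s, c i • v i ∈ S) (t : Finset K) :
    ∑ i ∈ s, (c i * ∏ ν ∈ t, (μ i - ν)) • v i ∈ S := by
  classical
  induction t using Finset.induction_on with
  | empty => simpa using hc
  | insert ν t hν ih =>
    have hstep : ∑ i ∈ s, (c i * ∏ ν' ∈ insert ν t, (μ i - ν')) • v i =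
        ⁅⁅H, ∑ i ∈ s, (c i * ∏ ν' ∈ t, (μ i - ν')) • v i⁆, H⁆ -
          ν • ∑ i ∈ s, (c i * ∏ ν' ∈ t, (μ i - ν')) • v i := by
      simp only [lie_sum, sum_lie, lie_smul, smul_lie, Finset.smul_sum, ← Finset.sum_sub_distrib]
      refine Finset.sum_congr rfl fun i hi => ?_
      rw [hv i hi, Finset.prod_insert hν, smul_smul, smul_smul, ← sub_smul]
      ring_nf
    rw [hstep]
    exact S.sub_mem (S.lie_mem (S.lie_mem hH ih) hH) (S.smul_mem ν ih)

theorem mem_of_sum_smul_mem_of_lie_lie_eq_smul [Field K] [LieAlgebra K L]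
    (S : LieSubalgebra K L) (hH : H ∈ S) {μ : ι → K} (hv : ∀ i ∈ s, ⁅⁅H, v i⁆, H⁆ = μ i • v i)
    {c : ι → K} (hc : ∑ i ∈ s, c i • v i ∈ S) {i₀ : ι} (hi₀ : i₀ ∈ s) (hci₀ : c i₀ ≠ 0)
    (hμ : ∀ j ∈ s, j ≠ i₀ → μ j ≠ μ i₀) :
    v i₀ ∈ S := by
  classical
  set t := (s.erase i₀).image μ
  have hsum := S.sum_smul_prod_mem_of_lie_lie_eq_smul hH hv hc t
  rw [Finset.sum_eq_single_of_mem i₀ hi₀ fun j hj hji₀ => by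
    rw [Finset.prod_eq_zero (Finset.mem_image_of_mem μ (Finset.mem_erase.2 ⟨hji₀, hj⟩))
      (sub_self _), mul_zero, zero_smul]] at hsum
  have hne : c i₀ * ∏ ν ∈ t, (μ i₀ - ν) ≠ 0 := by
    refine mul_ne_zero hci₀ (Finset.prod_ne_zero_iff.2 fun ν hν => sub_ne_zero.2 ?_)
    obtain ⟨j, hj, rfl⟩ := Finset.mem_image.1 hν
    exact (hμ j (Finset.mem_of_mem_erase hj) (Finset.ne_of_mem_erase hj)).symm
  rw [← inv_smul_smul₀ hne (v i₀)]
  exact S.smul_mem _ hsum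

end LieSubalgebra

theorem lie_diagonal_e (N : ℕ) (f : ℕ → ℂ) (a b : ℕ) :
    ⁅diagonal (fun i : Fin N => f (i + 1)), e N a b⁆ = (f a - f b) • e N a b := by
  ext i j
  simp only [Ring.lie_def, Matrix.sub_apply, diagonal_mul, mul_diagonal, Matrix.smul_apply, e,
    of_apply, smul_eq_mul]
  split_ifs with h
  · rw [h.1, h.2]; ring
  · simp

theorem lie_lie_diagonal_e (N : ℕ) (κ : ℕ → ℝ) (a b : ℕ) :
    ⁅⁅diagonal (fun i : Fin N => Complex.I * κ (i + 1)), e N a b⁆,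
        diagonal (fun i : Fin N => Complex.I * κ (i + 1))⁆ = (κ a - κ b) ^ 2 • e N a b := by
  rw [← lie_skew, lie_diagonal_e N (fun a => Complex.I * κ a), lie_smul,
    lie_diagonal_e N (fun a => Complex.I * κ a), smul_smul, ← neg_smul, ← Complex.coe_smul]
  congr 1
  push_cast
  linear_combination -((κ a : ℂ) - κ b) ^ 2 * Complex.I_sq

theorem lie_lie_diagonal_Y (N : ℕ) (κ : ℕ → ℝ) (a b : ℕ) :
    ⁅⁅diagonal (fun i : Fin N => Complex.I * κ (i + 1)), Y N a b⁆,
        diagonal (fun i : Fin N => Complex.I * κ (i + 1))⁆ = (κ a - κ b) ^ 2 • Y N a b := by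
  rw [Y, lie_smul, smul_lie, lie_add, add_lie, lie_lie_diagonal_e, lie_lie_diagonal_e,
    sub_sq_comm (κ b), ← smul_add, smul_comm]

noncomputable def cartanWeight (l : ℕ) (ε : ℕ → ℝ) (a : ℕ) : ℝ :=
  if a ≤ l then ε a else -ε (a - l)

theorem sum_mul_indicator_eq_cartanWeight (l : ℕ) (ε : ℕ → ℝ) {a : ℕ} (ha : 1 ≤ a)
    (ha' : a ≤ 2 * l) :
    ∑ m ∈ Finset.Icc 1 l, ε m * ((if a = m then 1 else 0) - (if a = m + l then 1 else 0)) =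
      cartanWeight l ε a := by
  rw [cartanWeight]
  split_ifs with hal
  · rw [Finset.sum_eq_single_of_mem a (Finset.mem_Icc.2 ⟨ha, hal⟩) fun m hm hma => by
      rw [Finset.mem_Icc] at hm; rw [if_neg (Ne.symm hma), if_neg (by omega)]; ring]
    rw [if_pos rfl, if_neg (by omega)]; ring
  · rw [Finset.sum_eq_single_of_mem (a - l) (Finset.mem_Icc.2 ⟨by omega, by omega⟩)
      fun m hm hma => by
        rw [Finset.mem_Icc] at hm; rw [if_neg (by omega), if_neg (by omega)]; ring]
    rw [if_neg (by omega), if_pos (by omega)]; ring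

theorem sum_smul_hC (l : ℕ) (ε : ℕ → ℝ) :
    ∑ m ∈ Finset.Icc 1 l, ε m • hC l m =
      diagonal (fun i : Fin (2 * l) => Complex.I * cartanWeight l ε (i + 1)) := by
  ext i j
  rw [Matrix.sum_apply]
  rcases eq_or_ne i j with rfl | hij
  · rw [diagonal_apply_eq, ← sum_mul_indicator_eq_cartanWeight l ε (Nat.le_add_left 1 i) (by omega)]
    simp only [hC, e, Matrix.smul_apply, Matrix.sub_apply, of_apply, and_self, smul_eq_mul]
    push_cast
    rw [Finset.mul_sum]
    exact Finset.sum_congr rfl fun m _ => by rw [Complex.real_smul]; split_ifs <;> simp [mul_comm]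
  · have hij' : (i : ℕ) ≠ j := Fin.val_ne_of_ne hij
    simp only [hC, e, Matrix.smul_apply, Matrix.sub_apply, of_apply, diagonal_apply_ne _ hij]
    exact Finset.sum_eq_zero fun m _ => by rw [if_neg (by omega), if_neg (by omega)]; simp

theorem lie_lie_diagonal_yC (l : ℕ) (ε : ℕ → ℝ) {m : ℕ} (hm : 1 ≤ m) (hml : m ≤ l) :
    ⁅⁅diagonal (fun i : Fin (2 * l) => Complex.I * cartanWeight l ε (i + 1)), yC l m⁆,
        diagonal (fun i : Fin (2 * l) => Complex.I * cartanWeight l ε (i + 1))⁆ =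
      w l ε m ^ 2 • yC l m := by
  rw [yC, w]
  split_ifs with h
  · rw [lie_lie_diagonal_Y, cartanWeight, cartanWeight, if_neg (by omega), if_pos le_rfl,
      show 2 * l - l = l by omega]
    ring_nf
  · have h₁ : cartanWeight l ε (m + 1) - cartanWeight l ε m = ε (m + 1) - ε m := by
      rw [cartanWeight, cartanWeight, if_pos (by omega), if_pos hml]
    have h₂ : cartanWeight l ε (m + l) - cartanWeight l ε (m + l + 1) = ε (m + 1) - ε m := by
      rw [cartanWeight, cartanWeight, if_neg (by omega), if_neg (by omega),
        show m + l - l = m by omega, show m + l + 1 - l = m + 1 by omega]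
      ring
    rw [lie_sub, sub_lie, lie_lie_diagonal_Y, lie_lie_diagonal_Y, h₁, h₂, smul_sub]

theorem yl_mem_lieSpan_sp_general (l : ℕ) (ε δ : ℕ → ℝ)
    (hδ : ∀ m, 1 ≤ m → m ≤ l → δ m ≠ 0)
    (hw : ∀ m, 1 ≤ m → m ≤ l - 1 → (w l ε m) ^ 2 ≠ (w l ε l) ^ 2)
    (H0 H1 : Matrix (Fin (2 * l)) (Fin (2 * l)) ℂ)
    (hH0 : H0 = ∑ m ∈ Finset.Icc 1 l, ε m • hC l m)
    (hH1 : H1 = ∑ m ∈ Finset.Icc 1 l, δ m • yC l m) :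
    yC l l ∈ LieSubalgebra.lieSpan ℝ (Matrix (Fin (2 * l)) (Fin (2 * l)) ℂ)
      {H0, H1} := by
  rcases Nat.eq_zero_or_pos l with rfl | hl
  · rw [show yC 0 0 = 0 from Matrix.ext fun i => i.elim0]
    exact zero_mem _
  rw [sum_smul_hC] at hH0
  refine (LieSubalgebra.lieSpan ℝ _ {H0, H1}).mem_of_sum_smul_mem_of_lie_lie_eq_smul
    (LieSubalgebra.subset_lieSpan (Set.mem_insert H0 {H1}))
    (fun m hm => hH0 ▸ lie_lie_diagonal_yC l ε (Finset.mem_Icc.1 hm).1 (Finset.mem_Icc.1 hm).2)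
    (hH1 ▸ LieSubalgebra.subset_lieSpan (Set.mem_insert_of_mem H0 rfl))
    (Finset.mem_Icc.2 ⟨hl, le_rfl⟩) (hδ l hl le_rfl) fun m hm hml => ?_
  rw [Finset.mem_Icc] at hm
  exact hw m hm.1 (by omega)

/-- if `iH₀' = Σ ε_m h_m`, `iH₁ = Σ δ_m y_m` in the `sp(ℓ)`
basis with all `ε_m, δ_m` nonzero and `ω_m² ≠ ω_ℓ²` for `1 ≤ m ≤ ℓ-1`, then
the real Lie algebra generated by `iH₀'` and `iH₁` contains `y_ℓ`. -/
theorem yl_mem_lieSpan_sp (l : ℕ) (ε δ : ℕ → ℝ)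
    (hε : ∀ m, 1 ≤ m → m ≤ l → ε m ≠ 0) (hδ : ∀ m, 1 ≤ m → m ≤ l → δ m ≠ 0)
    (hw : ∀ m, 1 ≤ m → m ≤ l - 1 → (w l ε m) ^ 2 ≠ (w l ε l) ^ 2)
    (H0 H1 : Matrix (Fin (2 * l)) (Fin (2 * l)) ℂ)
    (hH0 : H0 = ∑ m ∈ Finset.Icc 1 l, ε m • hC l m)
    (hH1 : H1 = ∑ m ∈ Finset.Icc 1 l, δ m • yC l m) :
    yC l l ∈ LieSubalgebra.lieSpan ℝ (Matrix (Fin (2 * l)) (Fin (2 * l)) ℂ)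
      {H0, H1} :=
  yl_mem_lieSpan_sp_general l ε δ hδ hw H0 H1 hH0 hH1
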